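/- Let (Ω, F, μ) be a σ-finite measure space, H a separable real Hilbert space, G a separable real Hilbert space, and for each ω ∈ Ω let f_ω ∈ Γ₀(H) and L_ω : G → H bounded linear. Assume: each prox_{f_ω} defines a measurable field (ω ↦ prox_{f_ω}(x(ω)) measurable for x ∈ L², and in L² for some z ∈ L²); ω ↦ L_ω z is measurable for each z ∈ G; and ∫_Ω ‖L_ω‖² dμ(ω) ≤ 1. Then there exists g ∈ Γ₀(G) such that for every z ∈ G, prox_g(z) = ∫_Ω L_ω*( prox_{f_ω}(L_ω z) ) dμ(ω). In other words, the integral mixture z ↦ ∫ L_ω*(prox_{f_ω}(L_ω z)) dμ is itself a proximity operator on G. -/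

import Mathlib

open MeasureTheory RealInnerProductSpace

/-- `f : H → EReal` is proper, lower semicontinuous, and convex. -/
def ProperLscConvex {H : Type*} [NormedAddCommGroup H] [InnerProductSpace ℝ H]
    (f : H → EReal) : Prop :=
  (∃ x, f x ≠ ⊤) ∧ (∀ x, f x ≠ ⊥) ∧ LowerSemicontinuous f ∧
    ∀ x y : H, ∀ t : ℝ, 0 ≤ t → t ≤ 1 →
      f (t • x + (1 - t) • y) ≤ (t : EReal) * f x + ((1 - t : ℝ) : EReal) * f y

/-- `p` is the proximal point of `g` at `u` with index `γ`. -/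
def IsProxPt {H : Type*} [NormedAddCommGroup H] [InnerProductSpace ℝ H]
    (γ : ℝ) (g : H → EReal) (u p : H) : Prop :=
  ∀ v : H, g p + ((‖u - p‖ ^ 2 / (2 * γ) : ℝ) : EReal) ≤
    g v + ((‖u - v‖ ^ 2 / (2 * γ) : ℝ) : EReal)

/-- The integral functional `x ↦ ∫ f_ω(x(ω)) dμ(ω)`, with the convention that the
integral is `+∞` unless the integrand is a.e. finite and integrable. -/
noncomputable def intFun {Ω H : Type*} [MeasurableSpace Ω] (μ : Measure Ω)
    [NormedAddCommGroup H] [InnerProductSpace ℝ H]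
    (f : Ω → H → EReal) (x : Ω → H) : EReal :=
  open scoped Classical in
  if (∀ᵐ ω ∂μ, f ω (x ω) ≠ ⊤) ∧ Integrable (fun ω => (f ω (x ω)).toReal) μ
  then ((∫ ω, (f ω (x ω)).toReal ∂μ : ℝ) : EReal) else ⊤

/-!
The mixture `T z = ∫ L_ω* (prox_{f_ω} (L_ω z)) dμ` makes the pairs `(T z, z - T z)` cyclically
monotone. Pointwise, each `prox_{f_ω}` satisfies `∑ ⟪uᵢ - pᵢ, pᵢ₊₁ - pᵢ⟫ ≤ 0` along cycles, by the
subgradient inequality `u - prox u ∈ ∂f(prox u)`; on a cycle this sum equals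
`∑ ⟪uᵢ, Δpᵢ⟫ + ∑ ‖Δpᵢ‖² / 2`. Integrating against `L_ω` turns `∑ ⟪L_ω zᵢ, Δpᵢ⟫` into
`∑ ⟪zᵢ, ΔTᵢ⟫`, and `∫ ‖L_ω‖² ≤ 1` gives `‖ΔTᵢ‖² ≤ ∫ ‖Δpᵢ‖²`, so the cyclic inequality survives.
Rockafellar's construction then yields a proper lsc convex `g` with `z - T z ∈ ∂g(T z)`, which
says exactly that `T z = prox_g z`.
-/

open Finset Filter Topology
open scoped ENNReal

section Measurability

variable {Ω E : Type*} [MeasurableSpace Ω] {μ : Measure Ω}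
  [NormedAddCommGroup E] [InnerProductSpace ℝ E]

/-- A form of Pettis' theorem: for a dense sequence `d`, `x ↦ (⟪x, d n⟫)ₙ` is a continuous
injection of a Polish space, hence a measurable embedding. -/
theorem aestronglyMeasurable_of_forall_inner [CompleteSpace E] [SecondCountableTopology E]
    {a : Ω → E} (h : ∀ w : E, AEMeasurable (fun ω => ⟪a ω, w⟫) μ) :
    AEStronglyMeasurable a μ := by
  borelize E
  obtain ⟨d, hd⟩ := TopologicalSpace.exists_dense_seq E
  have hinj : Function.Injective fun (x : E) (n : ℕ) => ⟪x, d n⟫ := by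
    intro x y hxy
    exact ext_inner_right ℝ <| congrFun <| hd.equalizer (g := fun w => ⟪x, w⟫)
      (h := fun w => ⟪y, w⟫) (continuous_const.inner continuous_id)
      (continuous_const.inner continuous_id) (funext fun n => congrFun hxy n)
  have hemb : MeasurableEmbedding fun (x : E) (n : ℕ) => ⟪x, d n⟫ :=
    (continuous_pi fun n => continuous_id.inner continuous_const).measurableEmbedding hinj
  exact (hemb.aemeasurable_comp_iff.1
    (aemeasurable_pi_lambda _ fun n => h (d n))).aestronglyMeasurable

theorem MeasureTheory.MemLp.integrable_inner {x y : Ω → E} (hx : MemLp x 2 μ)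
    (hy : MemLp y 2 μ) : Integrable (fun ω => ⟪x ω, y ω⟫) μ :=
  (hx.norm.integrable_mul hy.norm).mono' (hx.1.inner hy.1) <|
    ae_of_all _ fun _ => (Real.norm_eq_abs _).trans_le (abs_real_inner_le_norm _ _)

theorem memLp_two_of_integrable_sq {φ : Ω → ℝ} (hφ : 0 ≤ φ)
    (h : Integrable (fun ω => φ ω ^ 2) μ) : MemLp φ 2 μ := by
  have hmeas : AEStronglyMeasurable φ μ := by
    have : φ = fun ω => √(φ ω ^ 2) := funext fun ω => (Real.sqrt_sq (hφ ω)).symm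
    rw [this]
    exact Real.continuous_sqrt.comp_aestronglyMeasurable h.1
  exact (memLp_two_iff_integrable_sq hmeas).2 h

end Measurability

section Prox

variable {E : Type*} [NormedAddCommGroup E] [InnerProductSpace ℝ E] {f : E → EReal} {u p : E}

theorem ProperLscConvex.coe_toReal (hf : ProperLscConvex f) {x : E} (hx : f x ≠ ⊤) :
    ((f x).toReal : EReal) = f x :=
  EReal.coe_toReal hx (hf.2.1 x)

theorem IsProxPt.ne_top (hf : ProperLscConvex f) (h : IsProxPt 1 f u p) : f p ≠ ⊤ := by
  obtain ⟨v, hv⟩ := hf.1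
  intro hp
  have := h v
  rw [hp, EReal.top_add_of_ne_bot (EReal.coe_ne_bot _), top_le_iff] at this
  exact EReal.add_ne_top hv (EReal.coe_ne_top _) this

theorem IsProxPt.inner_sub_le_add (hf : ProperLscConvex f) (h : IsProxPt 1 f u p) {v : E}
    (hv : f v ≠ ⊤) {t : ℝ} (ht0 : 0 < t) (ht1 : t ≤ 1) :
    ⟪u - p, v - p⟫ ≤ (f v).toReal - (f p).toReal + t * ‖v - p‖ ^ 2 / 2 := by
  have hp := h.ne_top hf
  have hnorm : ‖u - (t • v + (1 - t) • p)‖ ^ 2 =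
      ‖u - p‖ ^ 2 - 2 * t * ⟪u - p, v - p⟫ + t ^ 2 * ‖v - p‖ ^ 2 := by
    rw [show u - (t • v + (1 - t) • p) = (u - p) - t • (v - p) by module, norm_sub_sq_real,
      real_inner_smul_right, norm_smul, Real.norm_of_nonneg ht0.le]
    ring
  have hE : (((f p).toReal + ‖u - p‖ ^ 2 / 2 : ℝ) : EReal) ≤
      ((t * (f v).toReal + (1 - t) * (f p).toReal + ‖u - (t • v + (1 - t) • p)‖ ^ 2 / 2 : ℝ)
        : EReal) := by
    calc (((f p).toReal + ‖u - p‖ ^ 2 / 2 : ℝ) : EReal)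
        = f p + ((‖u - p‖ ^ 2 / (2 * 1) : ℝ) : EReal) := by
          rw [mul_one, EReal.coe_add, hf.coe_toReal hp]
      _ ≤ f (t • v + (1 - t) • p) + ((‖u - (t • v + (1 - t) • p)‖ ^ 2 / (2 * 1) : ℝ) : EReal) :=
          h _
      _ ≤ (t : EReal) * f v + ((1 - t : ℝ) : EReal) * f p +
            ((‖u - (t • v + (1 - t) • p)‖ ^ 2 / (2 * 1) : ℝ) : EReal) :=
          add_le_add_left (hf.2.2.2 v p t ht0.le ht1) _
      _ = _ := by
          rw [mul_one, ← hf.coe_toReal hv, ← hf.coe_toReal hp]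
          norm_cast
  have hR := EReal.coe_le_coe_iff.1 hE
  rw [hnorm] at hR
  have : t * ⟪u - p, v - p⟫ ≤ t * ((f v).toReal - (f p).toReal + t * ‖v - p‖ ^ 2 / 2) := by
    nlinarith
  exact le_of_mul_le_mul_left this ht0

theorem IsProxPt.inner_sub_le (hf : ProperLscConvex f) (h : IsProxPt 1 f u p) {v : E}
    (hv : f v ≠ ⊤) : ⟪u - p, v - p⟫ ≤ (f v).toReal - (f p).toReal := by
  have hlim : Tendsto (fun t : ℝ => (f v).toReal - (f p).toReal + t * ‖v - p‖ ^ 2 / 2)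
      (𝓝[>] 0) (𝓝 ((f v).toReal - (f p).toReal)) := by
    refine tendsto_nhdsWithin_of_tendsto_nhds ?_
    simpa using ((continuous_mul_const (‖v - p‖ ^ 2)).div_const 2).const_add
      ((f v).toReal - (f p).toReal) |>.tendsto 0
  exact ge_of_tendsto hlim <| eventually_of_mem (Ioc_mem_nhdsGT one_pos) fun t ht =>
    h.inner_sub_le_add hf hv ht.1 ht.2

theorem IsProxPt.norm_sub_sq_le_inner (hf : ProperLscConvex f) {v q : E}
    (hu : IsProxPt 1 f u p) (hv : IsProxPt 1 f v q) : ‖p - q‖ ^ 2 ≤ ⟪u - v, p - q⟫ := by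
  have h₁ := hu.inner_sub_le hf (hv.ne_top hf)
  have h₂ := hv.inner_sub_le hf (hu.ne_top hf)
  have : ⟪u - v, p - q⟫ - ‖p - q‖ ^ 2 = -(⟪u - p, q - p⟫ + ⟪v - q, p - q⟫) := by
    rw [← real_inner_self_eq_norm_sq, ← neg_sub p q]
    simp only [inner_neg_right, inner_sub_left, inner_sub_right]
    ring
  linarith

theorem IsProxPt.norm_sub_le (hf : ProperLscConvex f) {v q : E}
    (hu : IsProxPt 1 f u p) (hv : IsProxPt 1 f v q) : ‖p - q‖ ≤ ‖u - v‖ := by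
  have h := (hu.norm_sub_sq_le_inner hf hv).trans (real_inner_le_norm _ _)
  rw [sq] at h
  rcases (norm_nonneg (p - q)).eq_or_lt with h0 | h0
  · rw [← h0]; exact norm_nonneg _
  · exact le_of_mul_le_mul_right h h0

theorem IsProxPt.eq (hf : ProperLscConvex f) {q : E} (hp : IsProxPt 1 f u p)
    (hq : IsProxPt 1 f u q) : p = q := by
  have h := hp.norm_sub_sq_le_inner hf hq
  rw [sub_self, inner_zero_left] at h
  exact sub_eq_zero.1 <| norm_eq_zero.1 <|
    (pow_eq_zero_iff two_ne_zero).1 (le_antisymm h (sq_nonneg _))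

theorem isProxPt_of_subgradient {g : E → EReal}
    (h : ∀ v, g p + ((⟪u - p, v - p⟫ : ℝ) : EReal) ≤ g v) : IsProxPt 1 g u p := by
  intro v
  have hsq : ‖u - p‖ ^ 2 / (2 * 1) ≤ ⟪u - p, v - p⟫ + ‖u - v‖ ^ 2 / (2 * 1) := by
    rw [show u - v = (u - p) - (v - p) by abel, norm_sub_sq_real (u - p)]
    nlinarith [sq_nonneg ‖v - p‖]
  calc g p + ((‖u - p‖ ^ 2 / (2 * 1) : ℝ) : EReal)
      ≤ g p + (((⟪u - p, v - p⟫ : ℝ) : EReal) + ((‖u - v‖ ^ 2 / (2 * 1) : ℝ) : EReal)) := by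
        rw [← EReal.coe_add]
        exact add_le_add_right (EReal.coe_le_coe_iff.2 hsq) _
    _ ≤ g v + ((‖u - v‖ ^ 2 / (2 * 1) : ℝ) : EReal) := by
        rw [← add_assoc]
        exact add_le_add_left (h v) _

end Prox

section CyclicMonotonicity

variable {ι E : Type*} [NormedAddCommGroup E] [InnerProductSpace ℝ E]

theorem properLscConvex_iSup {K : Type*} [Nonempty K] (φ : K → E → ℝ)
    (hcont : ∀ k, Continuous (φ k))
    (haff : ∀ k v w (t : ℝ), φ k (t • v + (1 - t) • w) = t * φ k v + (1 - t) * φ k w)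
    {v₀ : E} (hv₀ : ⨆ k, (φ k v₀ : EReal) ≠ ⊤) :
    ProperLscConvex fun v => ⨆ k, (φ k v : EReal) := by
  obtain ⟨k₀⟩ := ‹Nonempty K›
  refine ⟨⟨v₀, hv₀⟩, fun v => ne_bot_of_le_ne_bot (EReal.coe_ne_bot (φ k₀ v))
      (le_iSup (fun k => (φ k v : EReal)) k₀),
    lowerSemicontinuous_iSup fun k =>
      (continuous_coe_real_ereal.comp (hcont k)).lowerSemicontinuous,
    fun v w t ht0 ht1 => iSup_le fun k => ?_⟩
  rw [haff, EReal.coe_add, EReal.coe_mul, EReal.coe_mul]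
  exact add_le_add
    (mul_le_mul_of_nonneg_left (le_iSup (fun k => (φ k v : EReal)) k) (by exact_mod_cast ht0))
    (mul_le_mul_of_nonneg_left (le_iSup (fun k => (φ k w : EReal)) k)
      (by exact_mod_cast sub_nonneg.2 ht1))

/-- The family of pairs `(x j, y j)`, read as a subset of `E × E`, is cyclically monotone. -/
def CyclicallyMonotone (x y : ι → E) : Prop :=
  ∀ (m : ℕ) (s : ℕ → ι), s m = s 0 → ∑ i ∈ range m, ⟪y (s i), x (s (i + 1)) - x (s i)⟫ ≤ 0

theorem sum_inner_sub_eq_of_cycle (u a : ℕ → E) {m : ℕ} (ha : a m = a 0) :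
    ∑ i ∈ range m, ⟪u i - a i, a (i + 1) - a i⟫ =
      ∑ i ∈ range m, ⟪u i, a (i + 1) - a i⟫ + (∑ i ∈ range m, ‖a (i + 1) - a i‖ ^ 2) / 2 := by
  have hterm : ∀ i, ⟪u i - a i, a (i + 1) - a i⟫ = ⟪u i, a (i + 1) - a i⟫ +
      ‖a (i + 1) - a i‖ ^ 2 / 2 - (‖a (i + 1)‖ ^ 2 - ‖a i‖ ^ 2) / 2 := by
    intro i
    rw [norm_sub_sq_real, inner_sub_left, inner_sub_right, inner_sub_right,
      real_inner_self_eq_norm_sq, real_inner_comm (a i) (a (i + 1))]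
    ring
  simp only [hterm, sum_sub_distrib, sum_add_distrib, ← sum_div,
    sum_range_sub (fun i => ‖a i‖ ^ 2), ha, sub_self, zero_div, sub_zero]

theorem cyclicallyMonotone_of_isProxPt {f : E → EReal} (hf : ProperLscConvex f) {u p : ι → E}
    (h : ∀ j, IsProxPt 1 f (u j) (p j)) : CyclicallyMonotone p fun j => u j - p j := by
  intro m s hs
  calc ∑ i ∈ range m, ⟪u (s i) - p (s i), p (s (i + 1)) - p (s i)⟫
      ≤ ∑ i ∈ range m, ((f (p (s (i + 1)))).toReal - (f (p (s i))).toReal) :=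
        sum_le_sum fun i _ => (h (s i)).inner_sub_le hf ((h _).ne_top hf)
    _ = 0 := by rw [sum_range_sub (fun i => (f (p (s i))).toReal), hs, sub_self]

variable (x y : ι → E)

/-- Rockafellar's sum along the chain `x (s 0), …, x (s m), v`. -/
def chainSum (s : ℕ → ι) (m : ℕ) (v : E) : ℝ :=
  ∑ i ∈ range m, ⟪y (s i), x (s (i + 1)) - x (s i)⟫ + ⟪y (s m), v - x (s m)⟫

theorem chainSum_congr {s s' : ℕ → ι} {m : ℕ} (h : ∀ i ≤ m, s i = s' i) (v : E) :
    chainSum x y s m v = chainSum x y s' m v := by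
  unfold chainSum
  rw [sum_congr rfl fun i hi => by
    rw [h i (mem_range.1 hi).le, h (i + 1) (mem_range.1 hi)], h m le_rfl]

theorem chainSum_succ (s : ℕ → ι) (m : ℕ) (v : E) :
    chainSum x y s (m + 1) v =
      chainSum x y s m (x (s (m + 1))) + ⟪y (s (m + 1)), v - x (s (m + 1))⟫ := by
  simp only [chainSum, sum_range_succ]

theorem chainSum_update (s : ℕ → ι) (m : ℕ) (j : ι) (v : E) :
    chainSum x y (Function.update s (m + 1) j) (m + 1) v =
      chainSum x y s m (x j) + ⟪y j, v - x j⟫ := by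
  rw [chainSum_succ, Function.update_self,
    chainSum_congr x y (m := m) (s' := s) fun i hi => Function.update_of_ne (by omega) _ _]

theorem continuous_chainSum (s : ℕ → ι) (m : ℕ) : Continuous (chainSum x y s m) := by
  unfold chainSum
  fun_prop

theorem chainSum_convex_comb (s : ℕ → ι) (m : ℕ) (v w : E) (t : ℝ) :
    chainSum x y s m (t • v + (1 - t) • w) =
      t * chainSum x y s m v + (1 - t) * chainSum x y s m w := by
  simp only [chainSum]
  rw [show t • v + (1 - t) • w - x (s m) = t • (v - x (s m)) + (1 - t) • (w - x (s m)) by module,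
    inner_add_right, real_inner_smul_right, real_inner_smul_right]
  ring

variable {x y}

theorem CyclicallyMonotone.chainSum_le_zero (h : CyclicallyMonotone x y) (s : ℕ → ι) (m : ℕ) :
    chainSum x y s m (x (s 0)) ≤ 0 := by
  have hcyc := h (m + 1) (Function.update s (m + 1) (s 0)) (by simp)
  rw [sum_range_succ] at hcyc
  change chainSum x y _ m (x (Function.update s (m + 1) (s 0) (m + 1))) ≤ 0 at hcyc
  rwa [Function.update_self,
    chainSum_congr x y (m := m) (s' := s) fun i hi => Function.update_of_ne (by omega) _ _] at hcyc

/-- Rockafellar's construction: the supremum of the chain sums starting at a fixed index. -/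
theorem CyclicallyMonotone.exists_properLscConvex [Nonempty ι] (h : CyclicallyMonotone x y) :
    ∃ g : E → EReal, ProperLscConvex g ∧
      ∀ j v, g (x j) + ((⟪y j, v - x j⟫ : ℝ) : EReal) ≤ g v := by
  obtain ⟨j₀⟩ := ‹Nonempty ι›
  let K := {c : (ℕ → ι) × ℕ // c.1 0 = j₀}
  have : Nonempty K := ⟨⟨(fun _ => j₀, 0), rfl⟩⟩
  let g : E → EReal := fun v => ⨆ c : K, (chainSum x y c.1.1 c.1.2 v : EReal)
  have hsub : ∀ j v, g (x j) + ((⟪y j, v - x j⟫ : ℝ) : EReal) ≤ g v := by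
    intro j v
    refine EReal.add_le_of_le_sub (iSup_le fun c => ?_)
    rw [EReal.le_sub_iff_add_le (Or.inl (EReal.coe_ne_bot _)) (Or.inl (EReal.coe_ne_top _)),
      ← EReal.coe_add, ← chainSum_update]
    exact le_iSup_of_le (⟨(Function.update c.1.1 (c.1.2 + 1) j, c.1.2 + 1), by simp [c.2]⟩ : K)
      le_rfl
  have hg₀ : g (x j₀) ≤ 0 := iSup_le fun c => by
    have := h.chainSum_le_zero c.1.1 c.1.2
    rw [c.2] at this
    exact_mod_cast this
  exact ⟨g, properLscConvex_iSup _ (fun c => continuous_chainSum x y _ _)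
    (fun c => chainSum_convex_comb x y _ _) (ne_top_of_le_ne_top EReal.zero_ne_top hg₀), hsub⟩

end CyclicMonotonicity

section Mixture

variable {Ω G H : Type*} [MeasurableSpace Ω] {μ : Measure Ω}
  [NormedAddCommGroup G] [InnerProductSpace ℝ G] [NormedAddCommGroup H] [InnerProductSpace ℝ H]
  {L : Ω → G →L[ℝ] H}

theorem memLp_comp_of_norm_sub_le {E F : Type*} [NormedAddCommGroup E] [NormedAddCommGroup F]
    {p : ℝ≥0∞} {Φ : Ω → E → F} (hΦ : ∀ ω u v, ‖Φ ω u - Φ ω v‖ ≤ ‖u - v‖) {x z : Ω → E}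
    (hx : MemLp x p μ) (hz : MemLp z p μ) (hΦz : MemLp (fun ω => Φ ω (z ω)) p μ)
    (hΦx : AEStronglyMeasurable (fun ω => Φ ω (x ω)) μ) : MemLp (fun ω => Φ ω (x ω)) p μ :=
  (hΦz.norm.add (hx.sub hz).norm).of_le hΦx <| ae_of_all _ fun ω =>
    calc ‖Φ ω (x ω)‖ ≤ ‖Φ ω (z ω)‖ + ‖Φ ω (x ω) - Φ ω (z ω)‖ := norm_le_norm_add_norm_sub' _ _
      _ ≤ ‖Φ ω (z ω)‖ + ‖x ω - z ω‖ := by gcongr; exact hΦ ω _ _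
      _ ≤ _ := le_abs_self _

theorem memLp_apply_of_memLp_opNorm
    (hLmeas : ∀ z, AEStronglyMeasurable (fun ω => L ω z) μ)
    (hLnorm : MemLp (fun ω => ‖L ω‖) 2 μ) (z : G) : MemLp (fun ω => L ω z) 2 μ :=
  (hLnorm.mul_const ‖z‖).of_le (hLmeas z) <| ae_of_all _ fun ω =>
    ((L ω).le_opNorm z).trans (le_abs_self _)

theorem integrable_adjoint_apply [CompleteSpace G] [SecondCountableTopology G] [CompleteSpace H]
    (hLmeas : ∀ z, AEStronglyMeasurable (fun ω => L ω z) μ)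
    (hLnorm : MemLp (fun ω => ‖L ω‖) 2 μ) {y : Ω → H} (hy : MemLp y 2 μ) :
    Integrable (fun ω => ContinuousLinearMap.adjoint (L ω) (y ω)) μ := by
  refine (hLnorm.integrable_mul hy.norm).mono' (aestronglyMeasurable_of_forall_inner fun w => ?_) ?_
  · simp_rw [ContinuousLinearMap.adjoint_inner_left]
    exact (hy.1.inner (hLmeas w)).aemeasurable
  · refine ae_of_all _ fun ω => ?_
    calc ‖ContinuousLinearMap.adjoint (L ω) (y ω)‖
        ≤ ‖ContinuousLinearMap.adjoint (L ω)‖ * ‖y ω‖ := ContinuousLinearMap.le_opNorm _ _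
      _ = ‖L ω‖ * ‖y ω‖ := by rw [LinearIsometryEquiv.norm_map]

theorem inner_integral_adjoint_apply [CompleteSpace G] [CompleteSpace H] {y : Ω → H}
    (hy : Integrable (fun ω => ContinuousLinearMap.adjoint (L ω) (y ω)) μ) (w : G) :
    ⟪w, ∫ ω, ContinuousLinearMap.adjoint (L ω) (y ω) ∂μ⟫ = ∫ ω, ⟪L ω w, y ω⟫ ∂μ := by
  simp_rw [← integral_inner hy w, ContinuousLinearMap.adjoint_inner_right]

/-- By AM-GM, `⟪L d, y⟫ ≤ (‖L‖² ‖d‖² + ‖y‖²) / 2` pointwise, for `d` the integral itself. -/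
theorem norm_integral_adjoint_apply_sq_le [CompleteSpace G] [CompleteSpace H]
    (hLmeas : ∀ z, AEStronglyMeasurable (fun ω => L ω z) μ)
    (hLint : Integrable (fun ω => ‖L ω‖ ^ 2) μ) (hL1 : ∫ ω, ‖L ω‖ ^ 2 ∂μ ≤ 1) {y : Ω → H}
    (hy : MemLp y 2 μ) (hAy : Integrable (fun ω => ContinuousLinearMap.adjoint (L ω) (y ω)) μ) :
    ‖∫ ω, ContinuousLinearMap.adjoint (L ω) (y ω) ∂μ‖ ^ 2 ≤ ∫ ω, ‖y ω‖ ^ 2 ∂μ := by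
  set d := ∫ ω, ContinuousLinearMap.adjoint (L ω) (y ω) ∂μ
  have hLd := memLp_apply_of_memLp_opNorm hLmeas
    (memLp_two_of_integrable_sq (fun ω => norm_nonneg _) hLint) d
  have hy2 : Integrable (fun ω => ‖y ω‖ ^ 2) μ := (memLp_two_iff_integrable_sq_norm hy.1).1 hy
  have hbound : ∀ ω, ⟪L ω d, y ω⟫ ≤ (‖L ω‖ ^ 2 * ‖d‖ ^ 2 + ‖y ω‖ ^ 2) / 2 := fun ω => by
    have h₁ := (real_inner_le_norm (L ω d) (y ω)).trans
      (mul_le_mul_of_nonneg_right ((L ω).le_opNorm d) (norm_nonneg _))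
    nlinarith [two_mul_le_add_sq (‖L ω‖ * ‖d‖) ‖y ω‖]
  have hd : ‖d‖ ^ 2 ≤ ((∫ ω, ‖L ω‖ ^ 2 ∂μ) * ‖d‖ ^ 2 + ∫ ω, ‖y ω‖ ^ 2 ∂μ) / 2 :=
    calc ‖d‖ ^ 2 = ∫ ω, ⟪L ω d, y ω⟫ ∂μ := by
          rw [← real_inner_self_eq_norm_sq, inner_integral_adjoint_apply hAy]
      _ ≤ ∫ ω, (‖L ω‖ ^ 2 * ‖d‖ ^ 2 + ‖y ω‖ ^ 2) / 2 ∂μ :=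
          integral_mono (hLd.integrable_inner hy) (((hLint.mul_const _).add hy2).div_const 2) hbound
      _ = _ := by rw [integral_div, integral_add (hLint.mul_const _) hy2, integral_mul_const]
  nlinarith [mul_le_mul_of_nonneg_right hL1 (sq_nonneg ‖d‖)]

theorem cyclicallyMonotone_integral_adjoint [CompleteSpace G] [SecondCountableTopology G]
    [CompleteSpace H] (hLmeas : ∀ z, AEStronglyMeasurable (fun ω => L ω z) μ)
    (hLint : Integrable (fun ω => ‖L ω‖ ^ 2) μ) (hL1 : ∫ ω, ‖L ω‖ ^ 2 ∂μ ≤ 1)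
    {Q : G → Ω → H} (hQ : ∀ z, MemLp (Q z) 2 μ)
    (hcyc : ∀ ω, CyclicallyMonotone (fun z => Q z ω) fun z => L ω z - Q z ω) :
    CyclicallyMonotone (fun z => ∫ ω, ContinuousLinearMap.adjoint (L ω) (Q z ω) ∂μ)
      fun z => z - ∫ ω, ContinuousLinearMap.adjoint (L ω) (Q z ω) ∂μ := by
  intro m s hs
  have hLnorm := memLp_two_of_integrable_sq (fun ω => norm_nonneg (L ω)) hLint
  have hΔ : ∀ i, MemLp (fun ω => Q (s (i + 1)) ω - Q (s i) ω) 2 μ := fun i =>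
    (hQ _).sub (hQ _)
  have hAΔ := fun i => integrable_adjoint_apply hLmeas hLnorm (hΔ i)
  have hΔT : ∀ i, ∫ ω, ContinuousLinearMap.adjoint (L ω) (Q (s (i + 1)) ω) ∂μ -
      ∫ ω, ContinuousLinearMap.adjoint (L ω) (Q (s i) ω) ∂μ =
        ∫ ω, ContinuousLinearMap.adjoint (L ω) (Q (s (i + 1)) ω - Q (s i) ω) ∂μ := fun i => by
    simp_rw [map_sub]
    exact (integral_sub (integrable_adjoint_apply hLmeas hLnorm (hQ _))
      (integrable_adjoint_apply hLmeas hLnorm (hQ _))).symm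
  have hΔ2 := fun i => (memLp_two_iff_integrable_sq_norm (hΔ i).1).1 (hΔ i)
  have hΔL := fun i =>
    (memLp_apply_of_memLp_opNorm hLmeas hLnorm (s i)).integrable_inner (hΔ i)
  have hpt : ∀ ω, ∑ i ∈ range m, ⟪L ω (s i), Q (s (i + 1)) ω - Q (s i) ω⟫ +
      (∑ i ∈ range m, ‖Q (s (i + 1)) ω - Q (s i) ω‖ ^ 2) / 2 ≤ 0 := fun ω => by
    rw [← sum_inner_sub_eq_of_cycle (fun i => L ω (s i)) (fun i => Q (s i) ω) (by rw [hs])]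
    exact hcyc ω m s hs
  calc _ = _ := sum_inner_sub_eq_of_cycle _ _ (congrArg (fun z => ∫ ω,
        ContinuousLinearMap.adjoint (L ω) (Q z ω) ∂μ) hs)
    _ ≤ ∑ i ∈ range m, ⟪s i, ∫ ω, ContinuousLinearMap.adjoint (L ω)
          (Q (s (i + 1)) ω - Q (s i) ω) ∂μ⟫ +
        (∑ i ∈ range m, ∫ ω, ‖Q (s (i + 1)) ω - Q (s i) ω‖ ^ 2 ∂μ) / 2 := by
      simp_rw [hΔT]
      gcongr with i
      exact norm_integral_adjoint_apply_sq_le hLmeas hLint hL1 (hΔ i) (hAΔ i)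
    _ = ∫ ω, (∑ i ∈ range m, ⟪L ω (s i), Q (s (i + 1)) ω - Q (s i) ω⟫ +
          (∑ i ∈ range m, ‖Q (s (i + 1)) ω - Q (s i) ω‖ ^ 2) / 2) ∂μ := by
      rw [integral_add (integrable_finsetSum _ fun i _ => hΔL i)
          ((integrable_finsetSum _ fun i _ => hΔ2 i).div_const 2),
        integral_finsetSum _ fun i _ => hΔL i, integral_div,
        integral_finsetSum _ fun i _ => hΔ2 i]
      simp_rw [inner_integral_adjoint_apply (hAΔ _)]
    _ ≤ 0 := integral_nonpos hpt

end Mixture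

theorem integral_proximal_mixture_is_prox_general
    {Ω G H : Type*} [MeasurableSpace Ω] {μ : Measure Ω}
    [NormedAddCommGroup G] [InnerProductSpace ℝ G] [CompleteSpace G]
    [SecondCountableTopology G]
    [NormedAddCommGroup H] [InnerProductSpace ℝ H] [CompleteSpace H]
    (f : Ω → H → EReal) (hf : ∀ ω, ProperLscConvex (f ω))
    (P : Ω → H → H) (hP : ∀ ω u, IsProxPt 1 (f ω) u (P ω u))
    (hPmeas : ∀ x : Ω → H, MemLp x 2 μ →
      AEStronglyMeasurable (fun ω => P ω (x ω)) μ)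
    (hPz : ∃ z : Ω → H, MemLp z 2 μ ∧ MemLp (fun ω => P ω (z ω)) 2 μ)
    (L : Ω → G →L[ℝ] H)
    (hLmeas : ∀ z : G, AEStronglyMeasurable (fun ω => L ω z) μ)
    (hLint : Integrable (fun ω => ‖L ω‖ ^ 2) μ)
    (hL1 : (∫ ω, ‖L ω‖ ^ 2 ∂μ) ≤ 1) :
    ∃ g : G → EReal, ProperLscConvex g ∧
      ∀ z : G,
        IsProxPt 1 g z
          (∫ ω, ContinuousLinearMap.adjoint (L ω) (P ω (L ω z)) ∂μ) ∧
        ∀ v : G, IsProxPt 1 g z v →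
          v = ∫ ω, ContinuousLinearMap.adjoint (L ω) (P ω (L ω z)) ∂μ := by
  obtain ⟨z₀, hz₀, hPz₀⟩ := hPz
  have hLz := memLp_apply_of_memLp_opNorm hLmeas
    (memLp_two_of_integrable_sq (fun ω => norm_nonneg (L ω)) hLint)
  have hQ : ∀ z, MemLp (fun ω => P ω (L ω z)) 2 μ := fun z =>
    memLp_comp_of_norm_sub_le (fun ω u v => (hP ω u).norm_sub_le (hf ω) (hP ω v)) (hLz z) hz₀
      hPz₀ (hPmeas _ (hLz z))
  obtain ⟨g, hg, hsub⟩ := (cyclicallyMonotone_integral_adjoint hLmeas hLint hL1 hQ fun ω =>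
    cyclicallyMonotone_of_isProxPt (hf ω) fun z => hP ω (L ω z)).exists_properLscConvex
  have hprox := fun z => isProxPt_of_subgradient (hsub z)
  exact ⟨g, hg, fun z => ⟨hprox z, fun v hv => hv.eq hg (hprox z)⟩⟩

theorem integral_proximal_mixture_is_prox
    {Ω G H : Type*} [MeasurableSpace Ω] {μ : Measure Ω} [SigmaFinite μ]
    [NormedAddCommGroup G] [InnerProductSpace ℝ G] [CompleteSpace G]
    [SecondCountableTopology G]
    [NormedAddCommGroup H] [InnerProductSpace ℝ H] [CompleteSpace H]
    [SecondCountableTopology H]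
    (f : Ω → H → EReal) (hf : ∀ ω, ProperLscConvex (f ω))
    (P : Ω → H → H) (hP : ∀ ω u, IsProxPt 1 (f ω) u (P ω u))
    (hPmeas : ∀ x : Ω → H, MemLp x 2 μ →
      AEStronglyMeasurable (fun ω => P ω (x ω)) μ)
    (hPz : ∃ z : Ω → H, MemLp z 2 μ ∧ MemLp (fun ω => P ω (z ω)) 2 μ)
    (L : Ω → G →L[ℝ] H)
    (hLmeas : ∀ z : G, AEStronglyMeasurable (fun ω => L ω z) μ)
    (hLint : Integrable (fun ω => ‖L ω‖ ^ 2) μ)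
    (hL1 : (∫ ω, ‖L ω‖ ^ 2 ∂μ) ≤ 1) :
    ∃ g : G → EReal, ProperLscConvex g ∧
      ∀ z : G,
        IsProxPt 1 g z
          (∫ ω, ContinuousLinearMap.adjoint (L ω) (P ω (L ω z)) ∂μ) ∧
        ∀ v : G, IsProxPt 1 g z v →
          v = ∫ ω, ContinuousLinearMap.adjoint (L ω) (P ω (L ω z)) ∂μ :=
  integral_proximal_mixture_is_prox_general f hf P hP hPmeas hPz L hLmeas hLint hL1
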